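/- (Coercivity of the derivative of the logarithmic potential away from the mean value.) For every c ∈ (0,1) there exist constants C₀ > 0 and C₁ > 0 such that for all α ∈ (0,1), all m ∈ ℝ with |m| ≤ 1 + α − c, and all s ∈ (−1−α, 1+α), one has W'_{sg,α}(s)·(s − m) ≥ C₁·|W'_{sg,α}(s)| − C₀, where W'_{sg,α}(s) = α(log(1+α+s) − log(1+α−s)). -/

import Mathlib

/-!
Away from the endpoints, `|s| ≤ 1 + α - c/2`, the two logarithms in `W'_{sg,α}` differ by at
most `log (8/c)`, so both sides of the inequality are bounded and a large `C₀` absorbs them. Near an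
endpoint, `s` and `W'_{sg,α}(s)` have the same sign and `s - m` has that sign too, with
`|s - m| ≥ c/2`, so `W'_{sg,α}(s)(s - m) ≥ (c/2)|W'_{sg,α}(s)|`.
-/

open Filter Set

/-- The logarithmic potential `W_{sg,α}(s) = α((1+α+s)log(1+α+s) + (1+α−s)log(1+α−s))`.
(In Mathlib, `Real.log 0 = 0`, so the convention `0·log 0 = 0` holds automatically.) -/
noncomputable def Wsg (α s : ℝ) : ℝ :=
  α * ((1 + α + s) * Real.log (1 + α + s) + (1 + α - s) * Real.log (1 + α - s))

/-- The first derivative `W'_{sg,α}(s) = α(log(1+α+s) − log(1+α−s))`. -/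
noncomputable def Wsg' (α s : ℝ) : ℝ :=
  α * (Real.log (1 + α + s) - Real.log (1 + α - s))

/-- The second derivative `W''_{sg,α}(s) = α/(1+α+s) + α/(1+α−s)`. -/
noncomputable def Wsg'' (α s : ℝ) : ℝ :=
  α / (1 + α + s) + α / (1 + α - s)

/-- The third derivative `W'''_{sg,α}(s) = α/(1+α−s)² − α/(1+α+s)²`. -/
noncomputable def Wsg''' (α s : ℝ) : ℝ :=
  α / (1 + α - s) ^ 2 - α / (1 + α + s) ^ 2

open Real

theorem abs_log_sub_log_le {x y δ M : ℝ} (hδ : 0 < δ) (hx : x ∈ Set.Icc δ M)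
    (hy : y ∈ Set.Icc δ M) : |log x - log y| ≤ log (M / δ) := by
  have key : ∀ {x y : ℝ}, x ∈ Set.Icc δ M → y ∈ Set.Icc δ M → log x - log y ≤ log (M / δ) :=
    fun {x y} hx hy => by
      have hx0 : 0 < x := hδ.trans_le hx.1
      have hy0 : 0 < y := hδ.trans_le hy.1
      rw [← log_div hx0.ne' hy0.ne']
      exact log_le_log (div_pos hx0 hy0) (div_le_div₀ (hx0.le.trans hx.2) hx.2 hδ hy.1)
  exact abs_sub_le_iff.2 ⟨key hx hy, key hy hx⟩

theorem Wsg'_neg (α s : ℝ) : Wsg' α (-s) = -Wsg' α s := by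
  simp only [Wsg', ← sub_eq_add_neg, sub_neg_eq_add]
  ring

theorem Wsg'_nonneg {α s : ℝ} (hα : 0 ≤ α) (hs₀ : 0 ≤ s) (hs : s < 1 + α) : 0 ≤ Wsg' α s :=
  mul_nonneg hα (sub_nonneg.2 (log_le_log (by linarith) (by linarith)))

theorem abs_Wsg'_le {α s δ : ℝ} (hα : α ∈ Set.Icc 0 1) (hδ : 0 < δ) (hs : |s| ≤ 1 + α - δ) :
    |Wsg' α s| ≤ log (4 / δ) := by
  obtain ⟨hα₀, hα₁⟩ := hα
  obtain ⟨hs₁, hs₂⟩ := abs_le.1 hs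
  have hlog : |log (1 + α + s) - log (1 + α - s)| ≤ log (4 / δ) :=
    abs_log_sub_log_le hδ ⟨by linarith, by linarith⟩ ⟨by linarith, by linarith⟩
  calc |Wsg' α s| = α * |log (1 + α + s) - log (1 + α - s)| := by
        rw [Wsg', abs_mul, abs_of_nonneg hα₀]
    _ ≤ 1 * log (4 / δ) := mul_le_mul hα₁ hlog (abs_nonneg _) zero_le_one
    _ = log (4 / δ) := one_mul _

theorem mul_abs_Wsg'_le_Wsg'_mul_sub {α s m d : ℝ} (hα : 0 ≤ α) (hs : |s| < 1 + α)
    (hd : d ≤ |s| - |m|) : d * |Wsg' α s| ≤ Wsg' α s * (s - m) := by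
  wlog hs₀ : 0 ≤ s generalizing s m
  · have := this (s := -s) (m := -m) (by rwa [abs_neg]) (by rwa [abs_neg, abs_neg])
      (by linarith)
    rwa [Wsg'_neg, abs_neg, neg_sub_neg, ← neg_sub, neg_mul_neg] at this
  have hW := Wsg'_nonneg hα hs₀ (lt_of_abs_lt hs)
  rw [abs_of_nonneg hW, mul_comm]
  rw [abs_of_nonneg hs₀] at hd
  exact mul_le_mul_of_nonneg_left (by linarith [le_abs_self m]) hW

/-- **Coercivity of `W'_{sg,α}` away from the mean value.**
For every `c ∈ (0,1)` there exist `C₀ > 0`, `C₁ > 0` such that for all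
`α ∈ (0,1)`, all `m` with `|m| ≤ 1 + α − c`, and all `s ∈ (−1−α, 1+α)`,
`W'_{sg,α}(s)·(s − m) ≥ C₁|W'_{sg,α}(s)| − C₀`. -/
theorem stmt_9 (c : ℝ) (hc : c ∈ Set.Ioo (0 : ℝ) 1) :
    ∃ C₀ : ℝ, 0 < C₀ ∧ ∃ C₁ : ℝ, 0 < C₁ ∧
      ∀ α ∈ Set.Ioo (0 : ℝ) 1, ∀ m : ℝ, |m| ≤ 1 + α - c →
        ∀ s ∈ Set.Ioo (-(1 + α)) (1 + α),
          C₁ * |Wsg' α s| - C₀ ≤ Wsg' α s * (s - m) := by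
  obtain ⟨hc₀, hc₁⟩ := hc
  set L := log (4 / (c / 2))
  have hL : 0 < L := log_pos (by rw [lt_div_iff₀ (by positivity)]; linarith)
  refine ⟨5 * L, by positivity, c / 2, by positivity, ?_⟩
  rintro α ⟨hα₀, hα₁⟩ m hm s hs
  have hs' : |s| < 1 + α := abs_lt.2 hs
  rcases le_or_gt |s| (1 + α - c / 2) with hnear | hfar
  · have hW : |Wsg' α s| ≤ L := abs_Wsg'_le ⟨hα₀.le, hα₁.le⟩ (by positivity) hnear
    have hsm : |s - m| ≤ 4 := (abs_sub _ _).trans (by linarith)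
    have hprod : |Wsg' α s * (s - m)| ≤ L * 4 := by
      rw [abs_mul]
      exact mul_le_mul hW hsm (abs_nonneg _) hL.le
    nlinarith [neg_abs_le (Wsg' α s * (s - m)), abs_nonneg (Wsg' α s)]
  · have := mul_abs_Wsg'_le_Wsg'_mul_sub (m := m) (d := c / 2) hα₀.le hs' (by linarith)
    linarith
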